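/- Let φ be a co-closed G2-structure on a 7-manifold M, so that its full torsion tensor T is symmetric. Then the scalar curvature of the induced metric satisfies R = (Tr T)² − |T|². -/

import Mathlib

open scoped BigOperators

/-- Kronecker delta on `Fin 7` (the standard Euclidean metric `g`). -/
noncomputable def kdelta (i j : Fin 7) : ℝ := if i = j then 1 else 0

/-- Components of the basic 3-form `e^i ∧ e^j ∧ e^k` (a determinant of deltas). -/
noncomputable def E3 (i j k a b c : Fin 7) : ℝ :=
  Matrix.det (Matrix.of fun p q : Fin 3 => kdelta (![i, j, k] p) (![a, b, c] q))

/-- The standard `G₂` 3-form `φ = e^{123} + e^{145} + e^{167} + e^{246} - e^{257} - e^{347} - e^{356}`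
on `ℝ⁷` (indices written 0-based), as a totally antisymmetric 3-tensor. -/
noncomputable def stdPhi (a b c : Fin 7) : ℝ :=
  E3 0 1 2 a b c + E3 0 3 4 a b c + E3 0 5 6 a b c + E3 1 3 5 a b c
    - E3 1 4 6 a b c - E3 2 3 6 a b c - E3 2 4 5 a b c

/-- Components of the basic 4-form `e^i ∧ e^j ∧ e^k ∧ e^l`. -/
noncomputable def E4 (i j k l a b c d : Fin 7) : ℝ :=
  Matrix.det (Matrix.of fun p q : Fin 4 => kdelta (![i, j, k, l] p) (![a, b, c, d] q))

/-- The 4-form `ψ = *φ = e^{4567} + e^{2367} + e^{2345} + e^{1357} - e^{1346} - e^{1256} - e^{1247}`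
on `ℝ⁷` (indices written 0-based), as a totally antisymmetric 4-tensor. -/
noncomputable def stdPsi (a b c d : Fin 7) : ℝ :=
  E4 3 4 5 6 a b c d + E4 1 2 5 6 a b c d + E4 1 2 3 4 a b c d + E4 0 2 4 6 a b c d
    - E4 0 2 3 5 a b c d - E4 0 1 4 5 a b c d - E4 0 1 3 6 a b c d

/-!
For symmetric `T` both correction terms of the general identity are contractions of a tensor
antisymmetric in two indices against one symmetric in the same two indices, hence vanish:
`Tr(curl T)` pairs `φ_{amn}` (antisymmetric in `a, n`) with `∇_m T_{na}`, and `ψ(T,T)` pairs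
`ψ_{abcd}` (antisymmetric in `a, b`) with `T^{ab}`. What remains is `(Tr T)² − Tr(T²)`, and
`Tr(T²) = |T|²` again by symmetry.
-/

theorem sum_sum_mul_eq_zero_of_antisymm_of_symm {ι R : Type*} [Fintype ι] [Ring R]
    [IsAddTorsionFree R] (A S : ι → ι → R) (hA : ∀ a b, A b a = -A a b)
    (hS : ∀ a b, S b a = S a b) :
    ∑ a, ∑ b, A a b * S a b = 0 := by
  refine self_eq_neg.mp ?_
  calc ∑ a, ∑ b, A a b * S a b
      = ∑ a, ∑ b, A b a * S b a := Finset.sum_comm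
    _ = ∑ a, ∑ b, -(A a b * S a b) :=
        Finset.sum_congr rfl fun a _ => Finset.sum_congr rfl fun b _ => by rw [hA, hS, neg_mul]
    _ = -∑ a, ∑ b, A a b * S a b := by simp only [Finset.sum_neg_distrib]

lemma E3_swap₁₃ (i j k a b c : Fin 7) : E3 i j k c b a = -E3 i j k a b c := by
  have hcols : E3 i j k c b a = ((Matrix.of fun p q : Fin 3 =>
      kdelta (![i, j, k] p) (![a, b, c] q)).submatrix id (Equiv.swap 0 2)).det := by
    unfold E3
    congr 1
    ext p q
    fin_cases q <;> rfl
  rw [hcols, Matrix.det_permute', Equiv.Perm.sign_swap (by decide)]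
  simp [E3]

lemma E4_swap₁₂ (i j k l a b c d : Fin 7) : E4 i j k l b a c d = -E4 i j k l a b c d := by
  have hcols : E4 i j k l b a c d = ((Matrix.of fun p q : Fin 4 =>
      kdelta (![i, j, k, l] p) (![a, b, c, d] q)).submatrix id (Equiv.swap 0 1)).det := by
    unfold E4
    congr 1
    ext p q
    fin_cases q <;> rfl
  rw [hcols, Matrix.det_permute', Equiv.Perm.sign_swap (by decide)]
  simp [E4]

lemma stdPhi_swap₁₃ (a b c : Fin 7) : stdPhi c b a = -stdPhi a b c := by
  simp only [stdPhi, E3_swap₁₃ _ _ _ a b c]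
  ring

lemma stdPsi_swap₁₂ (a b c d : Fin 7) : stdPsi b a c d = -stdPsi a b c d := by
  simp only [stdPsi, E4_swap₁₂ _ _ _ _ a b c d]
  ring

lemma sum_mul_stdPhi_eq_zero (DT : Fin 7 → Fin 7 → Fin 7 → ℝ)
    (hDT : ∀ m n a, DT m n a = DT m a n) :
    ∑ a, ∑ m, ∑ n, DT m n a * stdPhi a m n = 0 := by
  calc ∑ a, ∑ m, ∑ n, DT m n a * stdPhi a m n
      = ∑ m, ∑ a, ∑ n, stdPhi a m n * DT m n a := by
        rw [Finset.sum_comm]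
        simp only [mul_comm]
    _ = 0 := Finset.sum_eq_zero fun m _ =>
        sum_sum_mul_eq_zero_of_antisymm_of_symm _ _
          (fun a n => stdPhi_swap₁₃ a m n) (fun a n => hDT m a n)

lemma sum_stdPsi_mul_mul_eq_zero (T : Fin 7 → Fin 7 → ℝ) (hT : ∀ a b, T a b = T b a) :
    ∑ a, ∑ b, ∑ c, ∑ d, stdPsi a b c d * T a b * T c d = 0 := by
  calc ∑ a, ∑ b, ∑ c, ∑ d, stdPsi a b c d * T a b * T c d
      = ∑ a, ∑ b, (∑ c, ∑ d, stdPsi a b c d * T c d) * T a b := by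
        simp only [Finset.sum_mul, mul_right_comm]
    _ = 0 := sum_sum_mul_eq_zero_of_antisymm_of_symm _ _
        (fun a b => by simp only [stdPsi_swap₁₂ a b, neg_mul, Finset.sum_neg_distrib])
        (fun a b => (hT a b).symm)

/-- Scalar curvature of a co-closed `G₂`-structure: if the full torsion tensor `T` is symmetric
(the co-closed case) — so that its covariant derivative `DT = ∇T` is symmetric in its last two
indices — then the general identity
`R = 2 Tr(curl T) - ψ(T,T) - Tr(T²) + (Tr T)²` reduces to `R = (Tr T)² - |T|²`,
where `(curl T)_{ab} = (∇_m T_{na}) φ_b{}^{mn}` and `ψ(T,T) = ψ_{abcd} T^{ab} T^{cd}`. -/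
theorem scalar_curvature_coclosed (T : Fin 7 → Fin 7 → ℝ)
    (DT : Fin 7 → Fin 7 → Fin 7 → ℝ) (R : ℝ)
    (hTsymm : ∀ a b : Fin 7, T a b = T b a)
    (hDTsymm : ∀ m n a : Fin 7, DT m n a = DT m a n)
    (hR : R = 2 * (∑ a : Fin 7, ∑ m : Fin 7, ∑ n : Fin 7, DT m n a * stdPhi a m n)
        - (∑ a : Fin 7, ∑ b : Fin 7, ∑ c : Fin 7, ∑ d : Fin 7, stdPsi a b c d * T a b * T c d)
        - (∑ a : Fin 7, ∑ k : Fin 7, T a k * T k a)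
        + (∑ a : Fin 7, T a a) ^ 2) :
    R = (∑ a : Fin 7, T a a) ^ 2 - ∑ a : Fin 7, ∑ b : Fin 7, T a b * T a b := by
  have hTrT2 : ∑ a, ∑ k, T a k * T k a = ∑ a, ∑ b, T a b * T a b :=
    Finset.sum_congr rfl fun a _ => Finset.sum_congr rfl fun k _ => by rw [hTsymm k a]
  rw [hR, sum_mul_stdPhi_eq_zero DT hDTsymm, sum_stdPsi_mul_mul_eq_zero T hTsymm, hTrT2]
  ring
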